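/- arXiv:math/0209311 — 6 statements merged into one kernel-verified Lean document; each statement's English description precedes it below -/
import Mathlib

section
/- Let B be a ring and a, b, c ∈ B such that 1 + a*c and 1 + b*a are invertible and a*c = c*a. Then (1 + a*b)*(1 + b*a)⁻¹ = (1 + a*(b + c + b*a*c))*(1 + (b + c + b*a*c)*a)⁻¹. (In particular (1+a*b)*(1+a*c) = 1 + a*(b+c+b*a*c) and (1+b*a)*(1+c*a) = 1 + (b+c+b*a*c)*a.) -/
/-! Both factors of the right-hand quotient are the left-hand ones multiplied on the right by
`1 + a * c = 1 + c * a`, a unit, which cancels in `x * Ring.inverse y`. -/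

theorem one_add_mul_mul_one_add_mul_left {R : Type*} [Ring R] (a b c : R) :
    (1 + a * b) * (1 + a * c) = 1 + a * (b + c + b * a * c) := by
  noncomm_ring

theorem one_add_mul_mul_one_add_mul_right {R : Type*} [Ring R] (a b c : R) :
    (1 + b * a) * (1 + c * a) = 1 + (b + c + b * a * c) * a := by
  noncomm_ring

theorem Ring.mul_mul_inverse_mul_cancel_right {M₀ : Type*} [MonoidWithZero M₀] {w : M₀}
    (x y : M₀) (hw : IsUnit w) : x * w * Ring.inverse (y * w) = x * Ring.inverse y := by
  rw [Ring.inverse_mul (Or.inr hw), mul_assoc, Ring.mul_inverse_cancel_left _ _ hw]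

theorem stmt2_general {B : Type*} [Ring B] (a b c : B)
    (hac : IsUnit (1 + a * c)) (hcomm : a * c = c * a) :
    (1 + a * b) * Ring.inverse (1 + b * a) =
        (1 + a * (b + c + b * a * c)) * Ring.inverse (1 + (b + c + b * a * c) * a) ∧
      (1 + a * b) * (1 + a * c) = 1 + a * (b + c + b * a * c) ∧
      (1 + b * a) * (1 + c * a) = 1 + (b + c + b * a * c) * a := by
  have hleft := one_add_mul_mul_one_add_mul_left a b c
  have hright := one_add_mul_mul_one_add_mul_right a b c
  refine ⟨?_, hleft, hright⟩
  rw [← hleft, ← hright, ← hcomm, Ring.mul_mul_inverse_mul_cancel_right _ _ hac]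

/-- Vaserstein's lemma: if `1 + a*c` and `1 + b*a` are invertible and `a*c = c*a` then
`(1+ab)(1+ba)⁻¹ = (1 + a(b+c+bac))(1 + (b+c+bac)a)⁻¹`; in particular
`(1+ab)(1+ac) = 1 + a(b+c+bac)` and `(1+ba)(1+ca) = 1 + (b+c+bac)a`. -/
theorem stmt2 {B : Type*} [Ring B] (a b c : B)
    (hac : IsUnit (1 + a * c)) (hba : IsUnit (1 + b * a)) (hcomm : a * c = c * a) :
    (1 + a * b) * Ring.inverse (1 + b * a) =
        (1 + a * (b + c + b * a * c)) * Ring.inverse (1 + (b + c + b * a * c) * a) ∧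
      (1 + a * b) * (1 + a * c) = 1 + a * (b + c + b * a * c) ∧
      (1 + b * a) * (1 + c * a) = 1 + (b + c + b * a * c) * a :=
  stmt2_general a b c hac hcomm
end

section
/- Let f : B → A be a ring homomorphism where B is a local ring, A is a nonzero ring, and f⁻¹(Jacobson radical of A) = Jacobson radical of B. Then f is a local homomorphism, i.e., every square matrix α over B whose image f(α) is invertible over A is itself invertible over B. -/
/-- A ring homomorphism is *local* if it reflects invertibility of square matrices
of every size. -/
def MatLocal {B A : Type*} [Ring B] [Ring A] (f : B →+* A) : Prop :=
  ∀ (n : ℕ) (α : Matrix (Fin n) (Fin n) B), IsUnit (α.map f) → IsUnit α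

/-!
Reducing modulo Jacobson radicals, `f` induces a ring map `g` from the division ring
`B ⧸ rad B` to the nonzero ring `A ⧸ rad A`; `g` is injective because its source is a division
ring. A square matrix `M` over a division ring is invertible as soon as `v ↦ v M` is injective,
and if `v M = 0` then `g v · g M = 0`, so `g v = 0` when `g M` is invertible, whence `v = 0`.
Thus `α` is invertible modulo `rad B`, and since `Mₙ(rad B) ⊆ rad Mₙ(B)` invertibility lifts
to `Mₙ(B)`.
-/

namespace Ideal

variable {R : Type*} [Ring R]

theorem jacobson_bot_ne_top [Nontrivial R] : jacobson (⊥ : Ideal R) ≠ ⊤ :=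
  jacobson_eq_top_iff.not.mpr bot_ne_top

theorem exists_mul_one_add_eq_one_of_mem_jacobson_bot {x : R}
    (hx : x ∈ jacobson (⊥ : Ideal R)) : ∃ z, z * (1 + x) = 1 := by
  obtain ⟨z, hz⟩ := mem_jacobson_iff.mp hx 1
  refine ⟨z, ?_⟩
  rw [mem_bot, mul_one, sub_eq_zero] at hz
  rw [mul_add, mul_one, add_comm, hz]

theorem isUnit_one_add_of_mem_jacobson_bot {x : R} (hx : x ∈ jacobson (⊥ : Ideal R)) :
    IsUnit (1 + x) := by
  obtain ⟨z, hz⟩ := exists_mul_one_add_eq_one_of_mem_jacobson_bot hx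
  -- `z = 1 - z * x` is itself left invertible, so its right inverse `1 + x` is two-sided
  obtain ⟨w, hw⟩ := exists_mul_one_add_eq_one_of_mem_jacobson_bot
    (neg_mem (mul_mem_left _ z hx))
  have hz' : 1 + -(z * x) = z := by
    rw [← hz, mul_add, mul_one, add_neg_cancel_right]
  rw [hz'] at hw
  have hw' : (1 + x) * z = 1 := left_inv_eq_right_inv hw hz ▸ hw
  exact isUnit_iff_exists.mpr ⟨z, hw', hz⟩

end Ideal

namespace IsLocalRing

variable {R : Type*} [Ring R] [IsLocalRing R]

instance : IsDedekindFiniteMonoid R where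
  mul_eq_one_symm {a b} hab := by
    -- `b * a` and `1 - b * a` are idempotents, one of which is a unit, hence equal to `1`
    have hidem : IsIdempotentElem (b * a) := by
      rw [IsIdempotentElem, mul_assoc, ← mul_assoc a, hab, one_mul]
    rcases isUnit_or_isUnit_of_add_one (add_sub_cancel (b * a) 1) with hba | hba
    · exact (IsIdempotentElem.iff_eq_one_of_isUnit hba).mp hidem
    · have h0 : 1 - b * a = 1 := (IsIdempotentElem.iff_eq_one_of_isUnit hba).mp hidem.one_sub
      have : a * b = 0 := by
        rw [sub_eq_self] at h0
        rw [← mul_one (a * b), ← hab, mul_assoc, ← mul_assoc b, h0, zero_mul, mul_zero]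
      exact absurd (hab.symm.trans this) one_ne_zero

theorem mem_jacobson_bot_iff {x : R} : x ∈ Ideal.jacobson (⊥ : Ideal R) ↔ ¬IsUnit x := by
  refine ⟨fun hx hunit => ?_, fun hx => Ideal.mem_jacobson_iff.mpr fun y => ?_⟩
  · exact Ideal.jacobson_bot_ne_top (R := R) (Ideal.eq_top_of_isUnit_mem _ hx hunit)
  · have hyx : ¬IsUnit (y * x) := fun h => hx (isUnit_of_mul_isUnit_right h)
    obtain ⟨u, hu⟩ := (isUnit_or_isUnit_of_add_one (neg_add_cancel_left (y * x) 1)).resolve_left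
      (by rwa [IsUnit.neg_iff])
    refine ⟨↑u⁻¹, ?_⟩
    rw [Ideal.mem_bot, mul_assoc, sub_eq_zero, ← mul_add_one, ← hu, Units.inv_mul]

variable (R) in
noncomputable abbrev divisionRingQuotientJacobson :
    DivisionRing (R ⧸ Ideal.jacobson (⊥ : Ideal R)) :=
  haveI := Ideal.Quotient.nontrivial_iff.mpr (Ideal.jacobson_bot_ne_top (R := R))
  DivisionRing.ofIsUnitOrEqZero fun x => by
    obtain ⟨b, rfl⟩ := Ideal.Quotient.mk_surjective x
    by_cases hb : IsUnit b
    · exact .inl (hb.map _)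
    · exact .inr (Ideal.Quotient.eq_zero_iff_mem.mpr (mem_jacobson_bot_iff.mpr hb))

end IsLocalRing

namespace Matrix

variable {n : Type*} [Fintype n] [DecidableEq n]

theorem isUnit_of_isUnit_map_of_divisionRing {K R : Type*} [DivisionRing K] [Semiring R]
    [Nontrivial R] (g : K →+* R) {M : Matrix n n K} (hM : IsUnit (M.map g)) : IsUnit M := by
  have hinj : Function.Injective M.vecMulLinear := by
    refine (injective_iff_map_eq_zero M.vecMulLinear).mpr fun v hv => ?_
    have hgv : (g ∘ v) ᵥ* M.map g = 0 ᵥ* M.map g := by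
      ext j
      rw [← RingHom.map_vecMul, show v ᵥ* M = 0 from hv, zero_vecMul, Pi.zero_apply,
        Pi.zero_apply, map_zero]
    funext i
    exact g.injective (by simpa using congrFun (vecMul_injective_of_isUnit hM hgv) i)
  obtain ⟨W, hW⟩ := vecMul_surjective_iff_exists_left_inverse.mp
    (LinearMap.injective_iff_surjective.mp hinj)
  exact IsUnit.of_mul_eq_one_right W hW

theorem isUnit_of_isUnit_map_mk_of_le_jacobson {R : Type*} [Ring R] {I : Ideal R}
    [I.IsTwoSided] (hI : I ≤ Ideal.jacobson ⊥) {M : Matrix n n R}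
    (hM : IsUnit (M.map (Ideal.Quotient.mk I))) : IsUnit M := by
  have isUnit_of_map_eq_one : ∀ P : Matrix n n R, P.map (Ideal.Quotient.mk I) = 1 → IsUnit P := by
    intro P hP
    have hmem : P - 1 ∈ Ideal.jacobson (⊥ : Ideal (Matrix n n R)) := by
      rw [← Ideal.matrix_bot]
      refine Ideal.matrix_jacobson_le _ ((Ideal.mem_matrix _ _ _).mpr fun i j => hI ?_)
      have h0 : (P - 1).map (Ideal.Quotient.mk I) = 0 := by
        rw [Matrix.map_sub _ (map_sub _), hP, Matrix.map_one _ (map_zero _) (map_one _), sub_self]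
      exact Ideal.Quotient.eq_zero_iff_mem.mp (congrFun₂ h0 i j)
    simpa using Ideal.isUnit_one_add_of_mem_jacobson_bot hmem
  obtain ⟨N, hMN, hNM⟩ := isUnit_iff_exists.mp hM
  obtain ⟨W, rfl⟩ : ∃ W : Matrix n n R, W.map (Ideal.Quotient.mk I) = N :=
    ⟨N.map (Function.surjInv Ideal.Quotient.mk_surjective), by ext; simp [Function.surjInv_eq]⟩
  have hMW := isUnit_of_map_eq_one (M * W) (by rw [Matrix.map_mul]; exact hMN)
  have hWM := isUnit_of_map_eq_one (W * M) (by rw [Matrix.map_mul]; exact hNM)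
  exact isUnit_iff_exists_and_exists.mpr
    ⟨⟨W * hMW.unit⁻¹.val, by rw [← Matrix.mul_assoc, hMW.mul_val_inv]⟩,
      ⟨hWM.unit⁻¹.val * W, by rw [Matrix.mul_assoc, hWM.val_inv_mul]⟩⟩

end Matrix

/-- If `B` is a local ring, `A` is nonzero and `f⁻¹(rad A) = rad B`, then `f` is a
local homomorphism. -/
theorem stmt5 {B A : Type*} [Ring B] [Ring A] [IsLocalRing B] [Nontrivial A]
    (f : B →+* A)
    (h : ∀ x : B, f x ∈ Ideal.jacobson (⊥ : Ideal A) ↔ x ∈ Ideal.jacobson (⊥ : Ideal B)) :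
    MatLocal f := by
  intro n α hα
  let := IsLocalRing.divisionRingQuotientJacobson B
  have := Ideal.Quotient.nontrivial_iff.mpr (Ideal.jacobson_bot_ne_top (R := A))
  let g : B ⧸ Ideal.jacobson (⊥ : Ideal B) →+* A ⧸ Ideal.jacobson (⊥ : Ideal A) :=
    Ideal.Quotient.lift _ ((Ideal.Quotient.mk _).comp f) fun x hx =>
      Ideal.Quotient.eq_zero_iff_mem.mpr ((h x).mpr hx)
  have hg : (α.map (Ideal.Quotient.mk _)).map g = (α.map f).map (Ideal.Quotient.mk _) := by
    ext; simp [g]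
  refine Matrix.isUnit_of_isUnit_map_mk_of_le_jacobson le_rfl
    (Matrix.isUnit_of_isUnit_map_of_divisionRing g ?_)
  rw [hg]
  exact hα.map (Ideal.Quotient.mk _).mapMatrix
end

section
/- Let B be a division ring and f : B → A an injective ring homomorphism into a nonzero ring A. Then every square matrix over B whose image under f is invertible over A is invertible over B. (Equivalently: every square matrix over a division ring is either invertible or a two-sided zero-divisor in the matrix ring.) -/
/-!
An injective homomorphism pulls units back to non-zero-divisors, and in an Artinian ring
every non-zero-divisor is a unit. Square matrices over a division ring form an Artinian ring.
-/

theorem RingHom.isUnit_of_isUnit_map_of_injective {R S : Type*} [Ring R] [IsArtinianRing R]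
    [Semiring S] (g : R →+* S) (hg : Function.Injective g) {a : R} (ha : IsUnit (g a)) :
    IsUnit a :=
  IsArtinianRing.isUnit_of_mem_nonZeroDivisors <|
    mem_nonZeroDivisors_of_injective hg ha.mem_nonZeroDivisors

theorem stmt6_general {B A : Type*} [DivisionRing B] [Ring A]
    (f : B →+* A) (hf : Function.Injective f) :
    MatLocal f := fun _ _ hα =>
  f.mapMatrix.isUnit_of_isUnit_map_of_injective (Matrix.map_injective hf) hα

/-- An injective ring homomorphism from a division ring into a nonzero ring is local:
every square matrix over `B` whose image is invertible is invertible. -/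
theorem stmt6 {B A : Type*} [DivisionRing B] [Ring A] [Nontrivial A]
    (f : B →+* A) (hf : Function.Injective f) :
    MatLocal f :=
  stmt6_general f hf
end

section
/- Let ε : B → A be a split surjective local ring homomorphism and ζ ∈ A an element commuting with every element of I = ker ε (identifying A with its image under the splitting). Then the commutator subgroup [ε⁻¹(1), ε⁻¹(1)] equals ε⁻¹(1) ∩ ⟨(1+ab)(1+ba)⁻¹ : ε(a)=0, ε(b)=ζ⟩. -/
private lemma loc1 {B A : Type*} [Ring B] [Ring A] {ε : B →+* A} (hloc : MatLocal ε)
    {x : B} (h : IsUnit (ε x)) : IsUnit x := by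
  obtain ⟨u, hu⟩ := h
  have entry : ∀ (M N : Matrix (Fin 1) (Fin 1) B), (M * N) 0 0 = M 0 0 * N 0 0 := by
    intro M N
    rw [Matrix.mul_apply, Fin.sum_univ_one]
  have entryA : ∀ (M N : Matrix (Fin 1) (Fin 1) A), (M * N) 0 0 = M 0 0 * N 0 0 := by
    intro M N
    rw [Matrix.mul_apply, Fin.sum_univ_one]
  have mext : ∀ (M N : Matrix (Fin 1) (Fin 1) A), M 0 0 = N 0 0 → M = N := by
    intro M N h
    ext i k
    fin_cases i; fin_cases k; exact h
  have hα : IsUnit ((Matrix.of fun _ _ => x : Matrix (Fin 1) (Fin 1) B).map ε) := by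
    refine isUnit_iff_exists.mpr ⟨Matrix.of fun _ _ => (↑u⁻¹ : A), ?_, ?_⟩
    · refine mext _ _ ?_
      rw [entryA]
      show ε x * ↑u⁻¹ = (1 : Matrix (Fin 1) (Fin 1) A) 0 0
      rw [Matrix.one_apply_eq, ← hu, Units.mul_inv]
    · refine mext _ _ ?_
      rw [entryA]
      show ↑u⁻¹ * ε x = (1 : Matrix (Fin 1) (Fin 1) A) 0 0
      rw [Matrix.one_apply_eq, ← hu, Units.inv_mul]
  obtain ⟨U, hU⟩ := hloc 1 _ hα
  have hx : U.val 0 0 = x := by rw [hU]; rfl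
  refine isUnit_iff_exists.mpr ⟨U.inv 0 0, ?_, ?_⟩
  · have e : (U.val * U.inv) 0 0 = (1 : Matrix (Fin 1) (Fin 1) B) 0 0 := by rw [U.val_inv]
    rw [entry, hx, Matrix.one_apply_eq] at e
    exact e
  · have e : (U.inv * U.val) 0 0 = (1 : Matrix (Fin 1) (Fin 1) B) 0 0 := by rw [U.inv_val]
    rw [entry, hx, Matrix.one_apply_eq] at e
    exact e

private lemma conj_sandwich {B : Type*} [Ring B] (D τ : Bˣ) (X X' Y Y' : B)
    (h1 : (↑D : B) * X = X') (h2 : (↑τ : B) * X' = Y) (h3 : (↑D : B) * Y' = Y) :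
    (↑(D⁻¹ * τ * D) : B) * X = Y' := by
  have e : (↑(D⁻¹ * τ * D) : B) * X = ↑D⁻¹ * (↑τ * (↑D * X)) := by
    simp only [Units.val_mul, mul_assoc]
  rw [e, h1, h2, ← h3, Units.inv_mul_cancel_left]

open scoped commutatorElement

/-- For a local augmentation `ε : B → A` and `ζ ∈ A` commuting (via the splitting `j`)
with every element of `ker ε`, the commutator subgroup of `ε⁻¹(1)` equals
`ε⁻¹(1) ∩ ⟨(1+ab)(1+ba)⁻¹ : ε(a) = 0, ε(b) = ζ⟩`. -/
theorem stmt15 {B A : Type*} [Ring B] [Ring A] (ε : B →+* A) (j : A →+* B)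
    (hsec : ε.comp j = RingHom.id A) (hloc : MatLocal ε) (ζ : A)
    (hζ : ∀ i : B, ε i = 0 → j ζ * i = i * j ζ) :
    ⁅MonoidHom.ker (Units.map ε.toMonoidHom), MonoidHom.ker (Units.map ε.toMonoidHom)⁆ =
      MonoidHom.ker (Units.map ε.toMonoidHom) ⊓
        Subgroup.closure {u : Bˣ | ∃ a b : B, ε a = 0 ∧ ε b = ζ ∧
          ∃ hv : IsUnit (1 + b * a), (u : B) = (1 + a * b) * ((hv.unit⁻¹ : Bˣ) : B)} := by
  set z := j ζ with hzdef
  have hz : ∀ x : B, ε x = 0 → z * x = x * z := hζ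
  have hεz : ε z = ζ := RingHom.congr_fun hsec ζ
  set K := MonoidHom.ker (Units.map ε.toMonoidHom) with hK
  set S := {u : Bˣ | ∃ a b : B, ε a = 0 ∧ ε b = ζ ∧
      ∃ hv : IsUnit (1 + b * a), (u : B) = (1 + a * b) * ((hv.unit⁻¹ : Bˣ) : B)} with hS
  -- membership in K
  have memK : ∀ u : Bˣ, u ∈ K ↔ ε ↑u = 1 := by
    intro u
    rw [hK, MonoidHom.mem_ker, Units.ext_iff]
    simp
  have epsK : ∀ u : Bˣ, u ∈ K → ε ↑u = 1 := fun u hu => (memK u).1 hu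
  have epsKinv : ∀ u : Bˣ, u ∈ K → ε (↑u⁻¹ : B) = 1 := fun u hu => epsK _ (K.inv_mem hu)
  have mkK : ∀ x : B, ε x = 1 → ∃ u : Bˣ, (↑u : B) = x ∧ u ∈ K := by
    intro x hx
    have hu : IsUnit x := loc1 hloc (x := x) (by rw [hx]; exact isUnit_one)
    exact ⟨hu.unit, hu.unit_spec, (memK _).2 (by rw [hu.unit_spec, hx])⟩
  -- generator membership criterion
  have genS : ∀ a b : B, ε a = 0 → ε b = ζ → ∀ σ : Bˣ,
      (↑σ : B) * (1 + b * a) = 1 + a * b → σ ∈ S := by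
    intro a b ha hb σ hσ
    have h0 : ε (1 + b * a) = 1 := by simp [ha]
    have hv : IsUnit (1 + b * a) := loc1 hloc (by rw [h0]; exact isUnit_one)
    have hsp := hv.unit_spec
    refine ⟨a, b, ha, hb, hv, ?_⟩
    have h1 : (↑σ : B) * ↑hv.unit = 1 + a * b := by rw [hsp]; exact hσ
    rw [← h1, mul_assoc, Units.mul_inv, mul_one]
  have eqS : ∀ u : Bˣ, u ∈ S → ∃ a b : B, ε a = 0 ∧ ε b = ζ ∧
      (↑u : B) * (1 + b * a) = 1 + a * b := by
    rintro u ⟨a, b, ha, hb, hv, hu⟩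
    refine ⟨a, b, ha, hb, ?_⟩
    have hsp := hv.unit_spec
    have hinv : (↑hv.unit⁻¹ : B) * (1 + b * a) = 1 := by
      have h0 := Units.inv_mul hv.unit
      rw [hsp] at h0
      exact h0
    rw [hu, mul_assoc, hinv, mul_one]
  -- closure generators lie in K
  have SK : ∀ u : Bˣ, u ∈ S → u ∈ K := by
    intro u hu
    obtain ⟨a, b, ha, hb, h⟩ := eqS u hu
    have h1 : ε ((↑u : B) * (1 + b * a)) = ε (1 + a * b) := by rw [h]
    simp [ha] at h1
    exact (memK u).2 h1
  -- conjugation stability of S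
  have conjS : ∀ u : Bˣ, u ∈ K → ∀ g : Bˣ, g ∈ S → u * g * u⁻¹ ∈ S := by
    intro u hu g hg
    obtain ⟨a, b, ha, hb, h⟩ := eqS g hg
    refine genS (↑u * a * ↑u⁻¹) (↑u * b * ↑u⁻¹) ?_ ?_ _ ?_
    · simp [ha]
    · simp [hb, epsK u hu, epsKinv u hu]
    · have e1 : ((↑u : B) * b * ↑u⁻¹) * (↑u * a * ↑u⁻¹) = ↑u * (b * a) * ↑u⁻¹ := by
        simp only [mul_assoc, Units.inv_mul_cancel_left]
      have e2 : ((↑u : B) * a * ↑u⁻¹) * (↑u * b * ↑u⁻¹) = ↑u * (a * b) * ↑u⁻¹ := by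
        simp only [mul_assoc, Units.inv_mul_cancel_left]
      rw [e1, e2]
      have key : (↑(u * g * u⁻¹) : B) * (1 + ↑u * (b * a) * ↑u⁻¹)
          = ↑u * (↑g * (1 + b * a)) * ↑u⁻¹ := by
        simp only [Units.val_mul, mul_add, add_mul, mul_one, one_mul, mul_assoc,
          Units.inv_mul_cancel_left]
      rw [key, h]
      rw [mul_add, mul_one, add_mul, Units.mul_inv]
  -- closure of S is stable under conjugation by K
  have conjC : ∀ u : Bˣ, u ∈ K → ∀ g : Bˣ, g ∈ Subgroup.closure S →
      u * g * u⁻¹ ∈ Subgroup.closure S := by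
    intro u hu g hg
    refine Subgroup.closure_induction
      (p := fun g _ => u * g * u⁻¹ ∈ Subgroup.closure S) ?_ ?_ ?_ ?_ hg
    · intro x hx
      exact Subgroup.subset_closure (conjS u hu x hx)
    · show u * 1 * u⁻¹ ∈ Subgroup.closure S
      have e : u * 1 * u⁻¹ = 1 := by group
      rw [e]; exact Subgroup.one_mem _
    · intro x y _ _ px py
      show u * (x * y) * u⁻¹ ∈ Subgroup.closure S
      have e : u * (x * y) * u⁻¹ = (u * x * u⁻¹) * (u * y * u⁻¹) := by group
      rw [e]; exact mul_mem px py
    · intro x _ px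
      show u * x⁻¹ * u⁻¹ ∈ Subgroup.closure S
      have e : u * x⁻¹ * u⁻¹ = (u * x * u⁻¹)⁻¹ := by group
      rw [e]; exact inv_mem px
  -- commutator subgroup stable under conjugation by K
  have conjComm : ∀ u : Bˣ, u ∈ K → ∀ g : Bˣ, g ∈ ⁅K, K⁆ → u * g * u⁻¹ ∈ ⁅K, K⁆ := by
    intro u hu g hg
    rw [Subgroup.commutator_def] at hg
    refine Subgroup.closure_induction
      (p := fun g _ => u * g * u⁻¹ ∈ ⁅K, K⁆) ?_ ?_ ?_ ?_ hg
    · rintro x ⟨g₁, h₁, g₂, h₂, rfl⟩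
      show u * ⁅g₁, g₂⁆ * u⁻¹ ∈ ⁅K, K⁆
      have e : u * ⁅g₁, g₂⁆ * u⁻¹ = ⁅u * g₁ * u⁻¹, u * g₂ * u⁻¹⁆ := by
        rw [commutatorElement_def, commutatorElement_def]; group
      rw [e]
      exact Subgroup.commutator_mem_commutator
        (mul_mem (mul_mem hu h₁) (K.inv_mem hu)) (mul_mem (mul_mem hu h₂) (K.inv_mem hu))
    · show u * 1 * u⁻¹ ∈ ⁅K, K⁆
      have e : u * 1 * u⁻¹ = 1 := by group
      rw [e]; exact Subgroup.one_mem _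
    · intro x y _ _ px py
      show u * (x * y) * u⁻¹ ∈ ⁅K, K⁆
      have e : u * (x * y) * u⁻¹ = (u * x * u⁻¹) * (u * y * u⁻¹) := by group
      rw [e]; exact mul_mem px py
    · intro x _ px
      show u * x⁻¹ * u⁻¹ ∈ ⁅K, K⁆
      have e : u * x⁻¹ * u⁻¹ = (u * x * u⁻¹)⁻¹ := by group
      rw [e]; exact inv_mem px
  -- symbols with a unit of K as second argument are commutators
  have symUnit : ∀ (a : B) (u : Bˣ), ε a = 0 → u ∈ K → ∀ σ : Bˣ,
      (↑σ : B) * (1 + ↑u * a) = 1 + a * ↑u → σ ∈ ⁅K, K⁆ := by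
    intro a u ha hu σ hσ
    have hw1 : ε ((1 : B) + ↑u * a) = 1 := by simp [epsK u hu, ha]
    obtain ⟨w, hw, hwK⟩ := mkK _ hw1
    have hσw : σ * w = u⁻¹ * (w * u) := by
      refine Units.ext ?_
      have l : (↑(σ * w) : B) = 1 + a * ↑u := by
        rw [Units.val_mul, hw]; exact hσ
      have r : (↑(u⁻¹ * (w * u)) : B) = 1 + a * ↑u := by
        simp only [Units.val_mul, hw, add_mul, one_mul, mul_add, mul_assoc,
          Units.inv_mul_cancel_left, Units.inv_mul]
      rw [l, r]
    have hc : σ = ⁅u⁻¹, w⁆ := by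
      rw [commutatorElement_def, inv_inv]
      calc σ = σ * w * w⁻¹ := (mul_inv_cancel_right σ w).symm
        _ = u⁻¹ * (w * u) * w⁻¹ := by rw [hσw]
        _ = u⁻¹ * w * u * w⁻¹ := by group
    rw [hc]
    exact Subgroup.commutator_mem_commutator (K.inv_mem hu) hwK
  -- symbols with both arguments in the kernel ideal are commutators
  have symI : ∀ a b : B, ε a = 0 → ε b = 0 → ∀ σ : Bˣ,
      (↑σ : B) * (1 + b * a) = 1 + a * b → σ ∈ ⁅K, K⁆ := by
    intro a b ha hb σ hσ
    obtain ⟨v, hv, hvK⟩ := mkK (1 + a) (by simp [ha])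
    set c := (↑v⁻¹ : B) * (b - 1) with hc
    have hvc : (↑v : B) * c = b - 1 := by rw [hc]; exact Units.mul_inv_cancel_left _ _
    have hva : (↑v : B) * a = a * ↑v := by rw [hv]; noncomm_ring
    have h1 : (↑v : B) * (1 + c * a) = 1 + b * a := by
      rw [mul_add, mul_one, ← mul_assoc, hvc, hv]; noncomm_ring
    have h3 : (↑v : B) * (1 + a * c) = 1 + a * b := by
      rw [mul_add, mul_one, ← mul_assoc, hva, mul_assoc, hvc, hv]; noncomm_ring
    have hσ' := conj_sandwich v σ _ _ _ _ h1 hσ h3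
    have hεc : ε (-c) = 1 := by
      have h2 := epsKinv v hvK
      simp [hc, hb, h2]
    obtain ⟨u₀, hu₀, hu₀K⟩ := mkK (-c) hεc
    have hmain : (↑(v⁻¹ * σ * v) : B) * (1 + ↑u₀ * (-a)) = 1 + (-a) * ↑u₀ := by
      rw [hu₀, neg_mul_neg, neg_mul_neg]; exact hσ'
    have hmem := symUnit (-a) u₀ (by simp [ha]) hu₀K _ hmain
    have e : σ = v * (v⁻¹ * σ * v) * v⁻¹ := by group
    rw [e]; exact conjComm v hvK _ hmem
  -- symbols with both arguments in the kernel ideal lie in the closure of S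
  have symIinC : ∀ a b : B, ε a = 0 → ε b = 0 → ∀ τ : Bˣ,
      (↑τ : B) * (1 + b * a) = 1 + a * b → τ ∈ Subgroup.closure S := by
    intro a b ha hb τ hτ
    have haz : z * a = a * z := hz a ha
    obtain ⟨D, hD, hDK⟩ := mkK (1 + a * z) (by simp [ha])
    set c := (↑D⁻¹ : B) * (b - z) with hc
    have hDc : (↑D : B) * c = b - z := by rw [hc]; exact Units.mul_inv_cancel_left _ _
    have hDa : (↑D : B) * a = a * ↑D := by
      rw [hD]
      calc (1 + a * z) * a = a + a * (z * a) := by noncomm_ring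
        _ = a + a * (a * z) := by rw [haz]
        _ = a * (1 + a * z) := by noncomm_ring
    have h1 : (↑D : B) * (1 + c * a) = 1 + b * a := by
      rw [mul_add, mul_one, ← mul_assoc, hDc, hD]
      calc 1 + a * z + (b - z) * a = 1 + a * z + b * a - z * a := by noncomm_ring
        _ = 1 + a * z + b * a - a * z := by rw [haz]
        _ = 1 + b * a := by noncomm_ring
    have h3 : (↑D : B) * (1 + a * c) = 1 + a * b := by
      rw [mul_add, mul_one, ← mul_assoc, hDa, mul_assoc, hDc, hD]
      noncomm_ring
    have hσ' := conj_sandwich D τ _ _ _ _ h1 hτ h3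
    have hεc : ε (-c) = ζ := by
      have h2 := epsKinv D hDK
      simp [hc, hb, hεz, h2]
    have hσS : D⁻¹ * τ * D ∈ S := by
      refine genS (-a) (-c) (by simp [ha]) hεc _ ?_
      rw [neg_mul_neg, neg_mul_neg]; exact hσ'
    have e : τ = D * (D⁻¹ * τ * D) * D⁻¹ := by group
    rw [e]
    exact conjC D hDK _ (Subgroup.subset_closure hσS)
  -- symbols with second argument a unit of K lie in the closure of S
  have symKinC : ∀ (a : B) (w : Bˣ), ε a = 0 → w ∈ K → ∀ σ : Bˣ,
      (↑σ : B) * (1 + ↑w * a) = 1 + a * ↑w → σ ∈ Subgroup.closure S := by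
    intro a w ha hw σ hσ
    obtain ⟨v, hv, hvK⟩ := mkK (1 + a) (by simp [ha])
    set c := (↑v⁻¹ : B) * (↑w - 1) with hc
    have hvc : (↑v : B) * c = ↑w - 1 := by rw [hc]; exact Units.mul_inv_cancel_left _ _
    have hva : (↑v : B) * a = a * ↑v := by rw [hv]; noncomm_ring
    have h1 : (↑v : B) * (1 + c * a) = 1 + ↑w * a := by
      rw [mul_add, mul_one, ← mul_assoc, hvc, hv]; noncomm_ring
    have h3 : (↑v : B) * (1 + a * c) = 1 + a * ↑w := by
      rw [mul_add, mul_one, ← mul_assoc, hva, mul_assoc, hvc, hv]; noncomm_ring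
    have hσ' := conj_sandwich v σ _ _ _ _ h1 hσ h3
    have hεc : ε c = 0 := by
      have h2 := epsKinv v hvK
      simp [hc, epsK w hw, h2]
    have hmem := symIinC a c ha hεc _ hσ'
    have e : σ = v * (v⁻¹ * σ * v) * v⁻¹ := by group
    rw [e]; exact conjC v hvK _ hmem
  -- direction 1 : commutators lie in the closure of S
  have dir1 : ⁅K, K⁆ ≤ Subgroup.closure S := by
    refine Subgroup.commutator_le.mpr ?_
    intro u hu v hv
    set a := (↑u : B) * (↑v - 1) with hadef
    have ha : ε a = 0 := by simp [hadef, epsK v hv]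
    refine symKinC a u⁻¹ ha (K.inv_mem hu) _ ?_
    have e1 : (1 : B) + ↑u⁻¹ * a = ↑v := by
      rw [hadef, Units.inv_mul_cancel_left]; noncomm_ring
    have e2 : (1 : B) + a * ↑u⁻¹ = ↑u * ↑v * ↑u⁻¹ := by
      rw [hadef]
      calc (1 : B) + ↑u * (↑v - 1) * ↑u⁻¹
          = 1 + ↑u * ↑v * ↑u⁻¹ - ↑u * ↑u⁻¹ := by noncomm_ring
        _ = ↑u * ↑v * ↑u⁻¹ := by rw [Units.mul_inv]; noncomm_ring
    rw [e1, e2]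
    have e3 : ⁅u, v⁆ * v = u * v * u⁻¹ := by group
    calc (↑⁅u, v⁆ : B) * ↑v = ↑(⁅u, v⁆ * v) := (Units.val_mul _ _).symm
      _ = ↑(u * v * u⁻¹) := by rw [e3]
      _ = ↑u * ↑v * ↑u⁻¹ := by simp [Units.val_mul]
  -- direction 2 : generators are commutators
  have dir2mem : ∀ u : Bˣ, u ∈ S → u ∈ ⁅K, K⁆ := by
    intro τ hτ
    obtain ⟨a, b, ha, hb, h⟩ := eqS τ hτ
    have haz : z * a = a * z := hz a ha
    obtain ⟨D, hD, hDK⟩ := mkK (1 + a * z) (by simp [ha])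
    set c := (↑D⁻¹ : B) * (b - z) with hc
    have hDc : (↑D : B) * c = b - z := by rw [hc]; exact Units.mul_inv_cancel_left _ _
    have hDa : (↑D : B) * a = a * ↑D := by
      rw [hD]
      calc (1 + a * z) * a = a + a * (z * a) := by noncomm_ring
        _ = a + a * (a * z) := by rw [haz]
        _ = a * (1 + a * z) := by noncomm_ring
    have h1 : (↑D : B) * (1 + c * a) = 1 + b * a := by
      rw [mul_add, mul_one, ← mul_assoc, hDc, hD]
      calc 1 + a * z + (b - z) * a = 1 + a * z + b * a - z * a := by noncomm_ring
        _ = 1 + a * z + b * a - a * z := by rw [haz]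
        _ = 1 + b * a := by noncomm_ring
    have h3 : (↑D : B) * (1 + a * c) = 1 + a * b := by
      rw [mul_add, mul_one, ← mul_assoc, hDa, mul_assoc, hDc, hD]
      noncomm_ring
    have hσ' := conj_sandwich D τ _ _ _ _ h1 h h3
    have hεc : ε c = 0 := by
      have h2 := epsKinv D hDK
      simp [hc, hb, hεz, h2]
    have hmem := symI a c ha hεc _ hσ'
    have e : τ = D * (D⁻¹ * τ * D) * D⁻¹ := by group
    rw [e]; exact conjComm D hDK _ hmem
  -- assemble
  have CK : Subgroup.closure S ≤ K := (Subgroup.closure_le _).mpr (fun u hu => SK u hu)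
  have hinf : K ⊓ Subgroup.closure S = Subgroup.closure S := inf_eq_right.mpr CK
  rw [hinf]
  exact le_antisymm dir1 ((Subgroup.closure_le _).mpr (fun u hu => dir2mem u hu))
end

section
/- Let ε : B → A be a local ring homomorphism (reflecting invertibility of square matrices) and let α be an invertible n×n matrix over B, n ≥ 2, with ε(α) = 1. Write α in block form ⎝α₁₁ α₁₂; α₂₁ α₂₂⎠ with α₁₁ of size 1×1. Then α₁₁ is a unit and α admits the unique LDU decomposition α = ⎝1 0; l 1⎠·diag(d₁, d₂)·⎝1 u; 0 1⎠ with l = α₂₁α₁₁⁻¹, d₁ = α₁₁, d₂ = α₂₂ − α₂₁α₁₁⁻¹α₁₂, u = α₁₁⁻¹α₁₂; moreover ε(d₁) = 1, ε(d₂) = 1, ε(l) = 0, ε(u) = 0, and d₂ is invertible. -/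
set_option maxHeartbeats 1000000

open Matrix

/-!
Since `ε(α) = 1`, the corner `ε(α₁₁)` is the `1 × 1` identity, so `α₁₁` is a unit by locality.
The LDU factorisation is then Gaussian elimination in block form, valid over any ring; the
triangular factors are units, hence so is the diagonal factor and with it the Schur complement
`d₂`. Multiplying out the factorisation shows that it determines `l`, `d₁`, `d₂`, `u`, and
applying `ε` blockwise gives the values of `ε` on them.
-/

namespace Matrix

variable {R : Type*} [Ring R] {p q : Type*} [Fintype p] [Fintype q] [DecidableEq p] [DecidableEq q]

theorem fromBlocks_ldu (l : Matrix q p R) (d₁ : Matrix p p R) (d₂ : Matrix q q R)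
    (u : Matrix p q R) :
    fromBlocks 1 0 l 1 * fromBlocks d₁ 0 0 d₂ * fromBlocks 1 u 0 1 =
      fromBlocks d₁ (d₁ * u) (l * d₁) (l * d₁ * u + d₂) := by
  simp only [fromBlocks_multiply, Matrix.one_mul, Matrix.mul_one, Matrix.zero_mul,
    Matrix.mul_zero, add_zero, zero_add]

theorem isUnit_fromBlocks_one_zero₁₂ (l : Matrix q p R) :
    IsUnit (fromBlocks (1 : Matrix p p R) 0 l (1 : Matrix q q R)) :=
  ⟨⟨fromBlocks 1 0 l 1, fromBlocks 1 0 (-l) 1, by simp [fromBlocks_multiply, ← fromBlocks_one],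
    by simp [fromBlocks_multiply, ← fromBlocks_one]⟩, rfl⟩

theorem isUnit_fromBlocks_one_zero₂₁ (u : Matrix p q R) :
    IsUnit (fromBlocks (1 : Matrix p p R) u 0 (1 : Matrix q q R)) :=
  ⟨⟨fromBlocks 1 u 0 1, fromBlocks 1 (-u) 0 1, by simp [fromBlocks_multiply, ← fromBlocks_one],
    by simp [fromBlocks_multiply, ← fromBlocks_one]⟩, rfl⟩

theorem IsUnit.of_fromBlocks_zero_zero₂₂ {d₁ : Matrix p p R} {d₂ : Matrix q q R}
    (h : IsUnit (fromBlocks d₁ 0 0 d₂)) : IsUnit d₂ := by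
  obtain ⟨v, hv⟩ := h
  have hr := v.val_inv
  have hl := v.inv_val
  rw [hv, ← fromBlocks_toBlocks v.inv, fromBlocks_multiply, ← fromBlocks_one,
    fromBlocks_inj] at hr hl
  exact ⟨⟨d₂, v.inv.toBlocks₂₂, by simpa using hr.2.2.2, by simpa using hl.2.2.2⟩, rfl⟩

variable {A : Matrix p p R} {B : Matrix p q R} {C : Matrix q p R} {D : Matrix q q R}

theorem fromBlocks_eq_ldu_of_isUnit (hA : IsUnit A) :
    fromBlocks A B C D =
      fromBlocks 1 0 (C * Ring.inverse A) 1 * fromBlocks A 0 0 (D - C * Ring.inverse A * B) *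
        fromBlocks 1 (Ring.inverse A * B) 0 1 := by
  rw [fromBlocks_ldu, Matrix.mul_assoc C, Ring.inverse_mul_cancel _ hA, Matrix.mul_one,
    ← Matrix.mul_assoc, Ring.mul_inverse_cancel _ hA, Matrix.one_mul,
    Matrix.mul_assoc C, add_sub_cancel]

theorem isUnit_schur_of_isUnit_fromBlocks (hA : IsUnit A) (h : IsUnit (fromBlocks A B C D)) :
    IsUnit (D - C * Ring.inverse A * B) := by
  obtain ⟨L, hL⟩ := isUnit_fromBlocks_one_zero₁₂ (C * Ring.inverse A)
  obtain ⟨U, hU⟩ := isUnit_fromBlocks_one_zero₂₁ (Ring.inverse A * B)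
  rw [fromBlocks_eq_ldu_of_isUnit hA, ← hL, ← hU, Units.isUnit_mul_units,
    Units.isUnit_units_mul] at h
  exact h.of_fromBlocks_zero_zero₂₂

theorem eq_of_fromBlocks_eq_ldu {l : Matrix q p R} {d₁ : Matrix p p R} {d₂ : Matrix q q R}
    {u : Matrix p q R} (hd₁ : IsUnit d₁)
    (h : fromBlocks A B C D = fromBlocks 1 0 l 1 * fromBlocks d₁ 0 0 d₂ * fromBlocks 1 u 0 1) :
    l = C * Ring.inverse A ∧ d₁ = A ∧ d₂ = D - C * Ring.inverse A * B ∧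
      u = Ring.inverse A * B := by
  rw [fromBlocks_ldu, fromBlocks_inj] at h
  obtain ⟨rfl, rfl, rfl, rfl⟩ := h
  have hl : l * A * Ring.inverse A = l := by
    rw [Matrix.mul_assoc, Ring.mul_inverse_cancel _ hd₁, Matrix.mul_one]
  have hu : Ring.inverse A * (A * u) = u := by
    rw [← Matrix.mul_assoc, Ring.inverse_mul_cancel _ hd₁, Matrix.one_mul]
  refine ⟨hl.symm, rfl, ?_, hu.symm⟩
  rw [hl, Matrix.mul_assoc l, add_sub_cancel_left]

omit [Fintype p] [Fintype q] in
theorem map_eq_of_fromBlocks_map_eq_one {S : Type*} [Ring S] (f : R →+* S)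
    (h : (fromBlocks A B C D).map f = 1) :
    A.map f = 1 ∧ B.map f = 0 ∧ C.map f = 0 ∧ D.map f = 1 := by
  rwa [fromBlocks_map, ← fromBlocks_one, fromBlocks_inj] at h

end Matrix

theorem stmt16_general {B A : Type*} [Ring B] [Ring A] (ε : B →+* A) (hloc : MatLocal ε)
    (m : ℕ)
    (A₁₁ : Matrix (Fin 1) (Fin 1) B) (A₁₂ : Matrix (Fin 1) (Fin m) B)
    (A₂₁ : Matrix (Fin m) (Fin 1) B) (A₂₂ : Matrix (Fin m) (Fin m) B)
    (hα : IsUnit (fromBlocks A₁₁ A₁₂ A₂₁ A₂₂))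
    (hε : (fromBlocks A₁₁ A₁₂ A₂₁ A₂₂).map ε = 1) :
    IsUnit A₁₁ ∧
      A₁₁.map ε = 1 ∧
      (A₂₂ - A₂₁ * Ring.inverse A₁₁ * A₁₂).map ε = 1 ∧
      (A₂₁ * Ring.inverse A₁₁).map ε = 0 ∧
      (Ring.inverse A₁₁ * A₁₂).map ε = 0 ∧
      IsUnit (A₂₂ - A₂₁ * Ring.inverse A₁₁ * A₁₂) ∧
      fromBlocks A₁₁ A₁₂ A₂₁ A₂₂ =
        fromBlocks 1 0 (A₂₁ * Ring.inverse A₁₁) 1 *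
          fromBlocks A₁₁ 0 0 (A₂₂ - A₂₁ * Ring.inverse A₁₁ * A₁₂) *
          fromBlocks 1 (Ring.inverse A₁₁ * A₁₂) 0 1 ∧
      ∀ (l : Matrix (Fin m) (Fin 1) B) (u : Matrix (Fin 1) (Fin m) B)
        (d₁ : Matrix (Fin 1) (Fin 1) B) (d₂ : Matrix (Fin m) (Fin m) B),
        IsUnit d₁ → IsUnit d₂ →
        fromBlocks A₁₁ A₁₂ A₂₁ A₂₂ =
          fromBlocks 1 0 l 1 * fromBlocks d₁ 0 0 d₂ * fromBlocks 1 u 0 1 →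
        l = A₂₁ * Ring.inverse A₁₁ ∧ d₁ = A₁₁ ∧
          d₂ = A₂₂ - A₂₁ * Ring.inverse A₁₁ * A₁₂ ∧ u = Ring.inverse A₁₁ * A₁₂ := by
  obtain ⟨h₁₁, h₁₂, h₂₁, h₂₂⟩ := map_eq_of_fromBlocks_map_eq_one ε hε
  have hA₁₁ : IsUnit A₁₁ := hloc 1 A₁₁ (h₁₁ ▸ isUnit_one)
  have hl : (A₂₁ * Ring.inverse A₁₁).map ε = 0 := by
    rw [Matrix.map_mul, h₂₁, Matrix.zero_mul]
  have hd₂ : (A₂₂ - A₂₁ * Ring.inverse A₁₁ * A₁₂).map ε = 1 := by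
    rw [Matrix.map_sub _ (map_sub ε), h₂₂, Matrix.map_mul, hl, Matrix.zero_mul, sub_zero]
  exact ⟨hA₁₁, h₁₁, hd₂, hl, by rw [Matrix.map_mul, h₁₂, Matrix.mul_zero],
    isUnit_schur_of_isUnit_fromBlocks hA₁₁ hα, fromBlocks_eq_ldu_of_isUnit hA₁₁,
    fun _ _ _ _ hd₁ _ h ↦ eq_of_fromBlocks_eq_ldu hd₁ h⟩

/-- Existence and uniqueness of the LDU decomposition of an invertible matrix `α`
(in block form with blocks of sizes `1` and `m`, `n = 1 + m ≥ 2`) with `ε(α) = 1`,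
over a local homomorphism `ε : B → A`:
`α = (1 0; l 1)·diag(d₁,d₂)·(1 u; 0 1)` with `l = α₂₁α₁₁⁻¹`, `d₁ = α₁₁`,
`d₂ = α₂₂ − α₂₁α₁₁⁻¹α₁₂`, `u = α₁₁⁻¹α₁₂`, `ε(d₁) = 1`, `ε(d₂) = 1`,
`ε(l) = 0`, `ε(u) = 0`, and `d₁`, `d₂` invertible. -/
theorem stmt16 {B A : Type*} [Ring B] [Ring A] (ε : B →+* A) (hloc : MatLocal ε)
    (m : ℕ) (hm : 0 < m)
    (A₁₁ : Matrix (Fin 1) (Fin 1) B) (A₁₂ : Matrix (Fin 1) (Fin m) B)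
    (A₂₁ : Matrix (Fin m) (Fin 1) B) (A₂₂ : Matrix (Fin m) (Fin m) B)
    (hα : IsUnit (fromBlocks A₁₁ A₁₂ A₂₁ A₂₂))
    (hε : (fromBlocks A₁₁ A₁₂ A₂₁ A₂₂).map ε = 1) :
    IsUnit A₁₁ ∧
      A₁₁.map ε = 1 ∧
      (A₂₂ - A₂₁ * Ring.inverse A₁₁ * A₁₂).map ε = 1 ∧
      (A₂₁ * Ring.inverse A₁₁).map ε = 0 ∧
      (Ring.inverse A₁₁ * A₁₂).map ε = 0 ∧
      IsUnit (A₂₂ - A₂₁ * Ring.inverse A₁₁ * A₁₂) ∧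
      fromBlocks A₁₁ A₁₂ A₂₁ A₂₂ =
        fromBlocks 1 0 (A₂₁ * Ring.inverse A₁₁) 1 *
          fromBlocks A₁₁ 0 0 (A₂₂ - A₂₁ * Ring.inverse A₁₁ * A₁₂) *
          fromBlocks 1 (Ring.inverse A₁₁ * A₁₂) 0 1 ∧
      ∀ (l : Matrix (Fin m) (Fin 1) B) (u : Matrix (Fin 1) (Fin m) B)
        (d₁ : Matrix (Fin 1) (Fin 1) B) (d₂ : Matrix (Fin m) (Fin m) B),
        IsUnit d₁ → IsUnit d₂ →
        fromBlocks A₁₁ A₁₂ A₂₁ A₂₂ =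
          fromBlocks 1 0 l 1 * fromBlocks d₁ 0 0 d₂ * fromBlocks 1 u 0 1 →
        l = A₂₁ * Ring.inverse A₁₁ ∧ d₁ = A₁₁ ∧
          d₂ = A₂₂ - A₂₁ * Ring.inverse A₁₁ * A₁₂ ∧ u = Ring.inverse A₁₁ * A₁₂ :=
  stmt16_general ε hloc m A₁₁ A₁₂ A₂₁ A₂₂ hα hε
end

section
/- Let A be a ring containing two elements y, z with yz ≠ zy, B = A[[x]], and ε : B → A evaluation at 0. Then with a = xz and b = y (so ε(ab) = ε(ba) = 0), the element (1+ab)(1+ba)⁻¹ = 1 + (zy − yz)x + ... is not equal to 1; more precisely its degree-1 coefficient is zy − yz ≠ 0. Hence the commutator group C = ⟨(1+ab)(1+ba)⁻¹ : ε(ab)=ε(ba)=0⟩ is nontrivial whenever A is noncommutative. -/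
/-- If `y*z ≠ z*y` in `A`, then for `a = x·z` and `b = y` in `B = A[[x]]` (so
`ε(ab) = ε(ba) = 0` for the evaluation `ε` at `0`), the element `(1+ab)(1+ba)⁻¹`
has degree-one coefficient `zy − yz ≠ 0`, so it is a nontrivial element of the
commutator group `C`; hence `C` is nontrivial whenever `A` is noncommutative. -/
theorem stmt18 {A : Type*} [Ring A] (y z : A) (hyz : y * z ≠ z * y)
    (a b : PowerSeries A)
    (ha : a = PowerSeries.X * PowerSeries.C z) (hb : b = PowerSeries.C y) :
    PowerSeries.constantCoeff (a * b) = 0 ∧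
      PowerSeries.constantCoeff (b * a) = 0 ∧
      IsUnit (1 + a * b) ∧ IsUnit (1 + b * a) ∧
      PowerSeries.coeff 1 ((1 + a * b) * Ring.inverse (1 + b * a)) = z * y - y * z ∧
      (1 + a * b) * Ring.inverse (1 + b * a) ≠ 1 := by
  open PowerSeries in
  have hab : a * b = X * C (z * y) := by
    rw [ha, hb, mul_assoc, ← map_mul]
  have hba : b * a = X * C (y * z) := by
    rw [ha, hb, ← mul_assoc, (PowerSeries.commute_X (PowerSeries.C y)).eq,
      mul_assoc, ← map_mul]
  have hc0 : ∀ w : A, PowerSeries.constantCoeff (PowerSeries.X * PowerSeries.C w) = 0 := by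
    intro w
    simp
  have h1 : PowerSeries.constantCoeff (a * b) = 0 := by rw [hab]; exact hc0 _
  have h2 : PowerSeries.constantCoeff (b * a) = 0 := by rw [hba]; exact hc0 _
  have hu1 : IsUnit (1 + a * b) := by
    rw [PowerSeries.isUnit_iff_constantCoeff, map_add, h1, map_one, add_zero]
    exact isUnit_one
  have hu2 : IsUnit (1 + b * a) := by
    rw [PowerSeries.isUnit_iff_constantCoeff, map_add, h2, map_one, add_zero]
    exact isUnit_one
  set v := Ring.inverse (1 + b * a) with hv
  have hvm : (1 + b * a) * v = 1 := Ring.mul_inverse_cancel _ hu2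
  have hveq : v + PowerSeries.X * PowerSeries.C (y * z) * v = 1 := by
    rw [← hba]
    calc v + b * a * v = (1 + b * a) * v := by noncomm_ring
    _ = 1 := hvm
  have hv0 : PowerSeries.constantCoeff v = 1 := by
    have := congrArg (PowerSeries.constantCoeff) hveq
    simp only [map_add, map_mul, PowerSeries.constantCoeff_X, zero_mul, add_zero,
      map_one] at this
    exact this
  have hv1 : PowerSeries.coeff 1 v = -(y * z) := by
    have := congrArg (PowerSeries.coeff 1) hveq
    rw [map_add, mul_assoc, PowerSeries.coeff_succ_X_mul 0 (PowerSeries.C (y * z) * v)] at this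
    have hcv : PowerSeries.coeff 0 (PowerSeries.C (y * z) * v)
        = y * z := by
      rw [PowerSeries.coeff_zero_eq_constantCoeff, map_mul, PowerSeries.constantCoeff_C, hv0,
        mul_one]
    rw [hcv] at this
    have h1' : PowerSeries.coeff 1 (1 : PowerSeries A) = 0 := by simp
    rw [h1'] at this
    exact eq_neg_of_add_eq_zero_left this
  have hkey : PowerSeries.coeff 1 ((1 + a * b) * v) = z * y - y * z := by
    have : (1 + a * b) * v = v + PowerSeries.X * (PowerSeries.C (z * y) * v) := by
      rw [hab]; noncomm_ring
    rw [this, map_add, PowerSeries.coeff_succ_X_mul 0,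
      PowerSeries.coeff_zero_eq_constantCoeff, map_mul, PowerSeries.constantCoeff_C, hv0,
      mul_one, hv1]
    abel
  refine ⟨h1, h2, hu1, hu2, hkey, ?_⟩
  intro hcontra
  rw [hcontra] at hkey
  simp only [PowerSeries.coeff_one, one_ne_zero, if_false] at hkey
  exact hyz (sub_eq_zero.mp hkey.symm).symm
end
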